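/- Propagation of finite-dimensionality of cohomology along commensurability: Let k be a field, V a vector space over k, and K a k-subspace of V. Let D₁ and D₂ be commensurable k-subspaces of V. If H⁰(D₁) = D₁ ∩ K and H¹(D₁) = V/(D₁ + K) are finite-dimensional over k, then H⁰(D₂) = D₂ ∩ K and H¹(D₂) = V/(D₂ + K) are also finite-dimensional over k. -/
import Mathlib


variable {k V : Type*} [Field k] [AddCommGroup V] [Module k V]

/-- Two `k`-subspaces `A`, `B` of `V` are commensurable if `(A + B)/(A ∩ B)` is
finite-dimensional over `k`. -/
def AreCommensurable (A B : Submodule k V) : Prop :=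
  FiniteDimensional k (↥(A ⊔ B) ⧸ ((A ⊓ B).comap (A ⊔ B).subtype))

private lemma fin_ext {M : Type*} [AddCommGroup M] [Module k M] (p : Submodule k M)
    (hp : FiniteDimensional k p) (hq : FiniteDimensional k (M ⧸ p)) :
    FiniteDimensional k M := by
  have h : Module.rank k M < Cardinal.aleph0 := by
    rw [← Submodule.rank_quotient_add_rank p]
    exact Cardinal.add_lt_aleph0 (Module.rank_lt_aleph0 k _) (Module.rank_lt_aleph0 k _)
  exact IsNoetherian.iff_fg.1 (IsNoetherian.iff_rank_lt_aleph0.2 h)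

private lemma fin_of_ker_of_cod {M N : Type*} [AddCommGroup M] [Module k M]
    [AddCommGroup N] [Module k N] (f : M →ₗ[k] N)
    (hker : FiniteDimensional k (LinearMap.ker f)) (hN : FiniteDimensional k N) :
    FiniteDimensional k M := by
  refine fin_ext (LinearMap.ker f) hker ?_
  exact Module.Finite.equiv (f.quotKerEquivRange).symm

/-- Finite-dimensionality of the cohomology `H⁰(D) = D ∩ K`, `H¹(D) = V/(D + K)`
propagates along commensurability. -/
theorem cohomology_finite_of_commensurable (K D₁ D₂ : Submodule k V)
    (hcomm : AreCommensurable D₁ D₂)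
    (h0 : FiniteDimensional k ↥(D₁ ⊓ K))
    (h1 : FiniteDimensional k (V ⧸ (D₁ ⊔ K))) :
    FiniteDimensional k ↥(D₂ ⊓ K) ∧ FiniteDimensional k (V ⧸ (D₂ ⊔ K)) := by
  unfold AreCommensurable at hcomm
  set S : Submodule k V := D₁ ⊔ D₂ with hS
  set I : Submodule k ↥S := (D₁ ⊓ D₂).comap S.subtype with hI
  constructor
  · -- H⁰
    have hle : D₂ ⊓ K ≤ S := le_trans inf_le_left le_sup_right
    let f : ↥(D₂ ⊓ K) →ₗ[k] (↥S ⧸ I) := I.mkQ.comp (Submodule.inclusion hle)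
    refine fin_of_ker_of_cod f ?_ hcomm
    -- ker f ≃ elements of D₂ ⊓ K lying in D₁ ⊓ D₂, which embed into D₁ ⊓ K
    have : FiniteDimensional k ↥(D₁ ⊓ K) := h0
    refine FiniteDimensional.of_injective
      (LinearMap.codRestrict (D₁ ⊓ K)
        ((D₂ ⊓ K).subtype.comp ((LinearMap.ker f).subtype.comp LinearMap.id)) ?_) ?_
    · rintro ⟨⟨x, hx⟩, hxker⟩
      have hx' : (Submodule.inclusion hle ⟨x, hx⟩ : ↥S) ∈ I := by
        simpa [f, LinearMap.mem_ker, Submodule.Quotient.mk_eq_zero] using hxker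
      exact ⟨hx'.1, hx.2⟩
    · intro a b hab
      have h' := congrArg Subtype.val hab
      simp only [LinearMap.codRestrict_apply, LinearMap.comp_apply, LinearMap.id_apply,
        Submodule.subtype_apply] at h'
      exact Subtype.ext (Subtype.ext h')
  · -- H¹
    have hle2 : D₂ ⊔ K ≤ S ⊔ K := sup_le (le_trans le_sup_right le_sup_left) le_sup_right
    have hle1 : D₁ ⊔ K ≤ S ⊔ K := sup_le (le_trans le_sup_left le_sup_left) le_sup_right
    -- V ⧸ (S ⊔ K) is finite dimensional as a quotient of V ⧸ (D₁ ⊔ K)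
    have hVQ : FiniteDimensional k (V ⧸ (S ⊔ K)) := by
      refine FiniteDimensional.of_surjective
        (Submodule.mapQ (D₁ ⊔ K) (S ⊔ K) LinearMap.id (by simpa using hle1)) ?_
      intro x
      obtain ⟨y, rfl⟩ := (S ⊔ K).mkQ_surjective x
      exact ⟨(D₁ ⊔ K).mkQ y, rfl⟩
    -- the factor map g : V ⧸ (D₂ ⊔ K) → V ⧸ (S ⊔ K)
    let g : (V ⧸ (D₂ ⊔ K)) →ₗ[k] (V ⧸ (S ⊔ K)) :=
      Submodule.mapQ (D₂ ⊔ K) (S ⊔ K) LinearMap.id (by simpa using hle2)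
    refine fin_of_ker_of_cod g ?_ hVQ
    -- ker g = (S ⊔ K).map mkQ = S.map mkQ, a quotient of (S ⧸ I)
    have hkerg : LinearMap.ker g = (S ⊔ K).map (D₂ ⊔ K).mkQ := by
      unfold g
      rw [Submodule.mapQ, Submodule.ker_liftQ]
      congr 1
      ext x
      simp [Submodule.mem_comap, LinearMap.mem_ker, Submodule.Quotient.mk_eq_zero]
    have hmap : (S ⊔ K).map (D₂ ⊔ K).mkQ = S.map (D₂ ⊔ K).mkQ := by
      rw [Submodule.map_sup]
      have hKbot : K.map (D₂ ⊔ K).mkQ = ⊥ := by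
        refine (Submodule.eq_bot_iff _).2 ?_
        rintro y ⟨x, hx, rfl⟩
        simpa [Submodule.Quotient.mk_eq_zero] using (le_sup_right : K ≤ D₂ ⊔ K) hx
      rw [hKbot, sup_bot_eq]
    -- S.map mkQ is the range of a map out of the finite-dimensional S ⧸ I
    have hker0 : I ≤ LinearMap.ker ((D₂ ⊔ K).mkQ.comp S.subtype) := by
      intro x hx
      simp only [LinearMap.mem_ker, LinearMap.comp_apply, Submodule.subtype_apply,
        Submodule.mkQ_apply, Submodule.Quotient.mk_eq_zero]
      exact le_sup_left (α := Submodule k V) hx.2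
    let φ : (↥S ⧸ I) →ₗ[k] V ⧸ (D₂ ⊔ K) := I.liftQ ((D₂ ⊔ K).mkQ.comp S.subtype) hker0
    have hrange : LinearMap.range φ = S.map (D₂ ⊔ K).mkQ := by
      unfold φ
      rw [Submodule.range_liftQ, LinearMap.range_comp, Submodule.range_subtype]
    rw [hkerg, hmap, ← hrange]
    exact Module.Finite.range φ
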